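/- arXiv:1001.3318 — 3 statements merged into one kernel-verified Lean document; each statement's English description precedes it below -/
import Mathlib

section
/- The map s ↦ (s² − 1, −75s⁵ + (345/4)s⁴ − 29s³ + (117/2)s² − 163/4) from ℝ to ℝ² is injective. -/
/-!
The first coordinate `s² − 1` determines `s` up to sign, and the odd part of the second
coordinate, `−s³(75s² + 29)`, vanishes only at `s = 0`, so `s` and `−s` are separated unless
they coincide.
-/

/-- The polynomial parametrization of the asymptotic variety of the Pinchuk map
of degree 25: `s ↦ (s² − 1, −75s⁵ + (345/4)s⁴ − 29s³ + (117/2)s² − 163/4)`. -/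
noncomputable def pinchukCurve (s : ℝ) : ℝ × ℝ :=
  (s ^ 2 - 1, -75 * s ^ 5 + (345 / 4) * s ^ 4 - 29 * s ^ 3 + (117 / 2) * s ^ 2 - 163 / 4)

theorem Function.injective_of_sq_eq_of_eq_neg {R α : Type*} [CommRing R] [NoZeroDivisors R]
    {f : R → α} (hsq : ∀ s t, f s = f t → s ^ 2 = t ^ 2) (hneg : ∀ s, f (-s) = f s → s = 0) :
    Function.Injective f := by
  intro s t h
  rcases sq_eq_sq_iff_eq_or_eq_neg.mp (hsq s t h) with rfl | rfl
  · rfl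
  · obtain rfl := hneg t h
    simp

theorem pinchukCurve_snd_sub_snd_neg (s : ℝ) :
    (pinchukCurve s).2 - (pinchukCurve (-s)).2 = -2 * s ^ 3 * (75 * s ^ 2 + 29) := by
  simp only [pinchukCurve]
  ring

theorem pinchukCurve_injective : Function.Injective pinchukCurve := by
  refine Function.injective_of_sq_eq_of_eq_neg (fun s t h => ?_) (fun s h => ?_)
  · simpa [pinchukCurve] using congrArg Prod.fst h
  · have hodd : -2 * s ^ 3 * (75 * s ^ 2 + 29) = 0 := by
      rw [← pinchukCurve_snd_sub_snd_neg, h, sub_self]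
    have hpos : (0 : ℝ) < 75 * s ^ 2 + 29 := by positivity
    simpa [hpos.ne'] using hodd
end

section
/- The derivative of the parametrization s ↦ (s² − 1, −75s⁵ + (345/4)s⁴ − 29s³ + (117/2)s² − 163/4), namely s ↦ (2s, −375s⁴ + 345s³ − 87s² + 117s), vanishes exactly at s = 0; the corresponding point of the curve is (−1, −163/4). -/
/-- The derivative of the parametrization. -/
noncomputable def pinchukCurve' (s : ℝ) : ℝ × ℝ :=
  (2 * s, -375 * s ^ 4 + 345 * s ^ 3 - 87 * s ^ 2 + 117 * s)

theorem hasDerivAt_pinchukCurve (s : ℝ) : HasDerivAt pinchukCurve (pinchukCurve' s) s := by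
  have hx : HasDerivAt (fun s : ℝ => s ^ 2 - 1) (2 * s) s := by
    simpa using (hasDerivAt_pow 2 s).sub_const 1
  have hy : HasDerivAt
      (fun s : ℝ => -75 * s ^ 5 + (345 / 4) * s ^ 4 - 29 * s ^ 3 + (117 / 2) * s ^ 2 - 163 / 4)
      (-375 * s ^ 4 + 345 * s ^ 3 - 87 * s ^ 2 + 117 * s) s := by
    exact (((((hasDerivAt_pow 5 s).const_mul (-75)).add
      ((hasDerivAt_pow 4 s).const_mul (345 / 4))).sub
      ((hasDerivAt_pow 3 s).const_mul 29)).add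
      ((hasDerivAt_pow 2 s).const_mul (117 / 2))).sub_const (163 / 4) |>.congr_deriv (by ring)
  exact hx.prodMk hy

theorem pinchukCurve'_eq_zero_iff (s : ℝ) : pinchukCurve' s = 0 ↔ s = 0 := by
  constructor
  · intro h
    simpa [pinchukCurve'] using congrArg Prod.fst h
  · rintro rfl
    simp [pinchukCurve']

theorem pinchukCurve_zero : pinchukCurve 0 = (-1, -163 / 4) := by
  norm_num [pinchukCurve]

theorem pinchukCurve_deriv_vanishes_only_at_zero :
    (∀ s : ℝ, HasDerivAt pinchukCurve (pinchukCurve' s) s) ∧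
    (∀ s : ℝ, pinchukCurve' s = (0, 0) ↔ s = 0) ∧
    pinchukCurve 0 = (-1, -163 / 4) :=
  ⟨hasDerivAt_pinchukCurve, pinchukCurve'_eq_zero_iff, pinchukCurve_zero⟩
end

section
/- Let c, h₀ ∈ ℝ with c ≠ h₀ and c − 2h₀ − h₀² ≠ 0, and set x = (c − h₀)(h₀ + 1)/(c − 2h₀ − h₀²)² and y = (c − 2h₀ − h₀²)²(c − h₀ − h₀²)/(c − h₀)². Then P(x,y) = c and t(x,y)·(x·t(x,y) + 1) = h₀, where t(x,y) = xy − 1. That is, these formulas rationally parametrize the level set P = c by the value of h. -/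
/-- `t = xy − 1`. -/
noncomputable def tF (x y : ℝ) : ℝ := x * y - 1

/-- `h = t(xt + 1)`. -/
noncomputable def hF (x y : ℝ) : ℝ := tF x y * (x * tF x y + 1)

/-- `f = (xt + 1)²(t² + y)`. -/
noncomputable def fF (x y : ℝ) : ℝ := (x * tF x y + 1) ^ 2 * (tF x y ^ 2 + y)

/-- `P = f + h`. -/
noncomputable def PF (x y : ℝ) : ℝ := fF x y + hF x y

/-! With `e = c - h₀` and `d = c - 2h₀ - h₀²` the parametrization gives `t = h₀ d / e` and
`xt + 1 = e / d`, so `h = t(xt + 1) = h₀`, while `t² + y = d² / e`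
makes `f = (e / d)² (t² + y) = e`; hence `P = f + h = c`. -/

noncomputable def paramX (c h₀ : ℝ) : ℝ := (c - h₀) * (h₀ + 1) / (c - 2 * h₀ - h₀ ^ 2) ^ 2

noncomputable def paramY (c h₀ : ℝ) : ℝ :=
  (c - 2 * h₀ - h₀ ^ 2) ^ 2 * (c - h₀ - h₀ ^ 2) / (c - h₀) ^ 2

section Parametrization

variable {c h₀ : ℝ}

theorem tF_param (he : c - h₀ ≠ 0) (hd : c - 2 * h₀ - h₀ ^ 2 ≠ 0) :
    tF (paramX c h₀) (paramY c h₀) = h₀ * (c - 2 * h₀ - h₀ ^ 2) / (c - h₀) := by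
  rw [tF, paramX, paramY, div_mul_div_comm, div_sub_one (by positivity),
    div_eq_div_iff (by positivity) he]
  ring

theorem paramX_mul_tF_add_one (he : c - h₀ ≠ 0) (hd : c - 2 * h₀ - h₀ ^ 2 ≠ 0) :
    paramX c h₀ * tF (paramX c h₀) (paramY c h₀) + 1 = (c - h₀) / (c - 2 * h₀ - h₀ ^ 2) := by
  rw [tF_param he hd, paramX, div_mul_div_comm, div_add_one (by positivity),
    div_eq_div_iff (by positivity) hd]
  ring

theorem hF_param (he : c - h₀ ≠ 0) (hd : c - 2 * h₀ - h₀ ^ 2 ≠ 0) :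
    hF (paramX c h₀) (paramY c h₀) = h₀ := by
  rw [hF, paramX_mul_tF_add_one he hd, tF_param he hd, div_mul_div_cancel₀ he,
    mul_div_cancel_right₀ _ hd]

theorem fF_param (he : c - h₀ ≠ 0) (hd : c - 2 * h₀ - h₀ ^ 2 ≠ 0) :
    fF (paramX c h₀) (paramY c h₀) = c - h₀ := by
  rw [fF, paramX_mul_tF_add_one he hd, tF_param he hd, paramY]
  -- otherwise `field_simp` normalises `2 * h₀` to `h₀ * 2` and no longer matches `hd`
  generalize c - 2 * h₀ - h₀ ^ 2 = d at hd ⊢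
  field_simp
  ring

theorem PF_param (he : c - h₀ ≠ 0) (hd : c - 2 * h₀ - h₀ ^ 2 ≠ 0) :
    PF (paramX c h₀) (paramY c h₀) = c := by
  rw [PF, fF_param he hd, hF_param he hd, sub_add_cancel]

end Parametrization

/-- The rational parametrization of the level set `P = c` by the value of `h`. -/
theorem pinchuk_level_set_parametrization (c h₀ : ℝ) (h1 : c ≠ h₀)
    (h2 : c - 2 * h₀ - h₀ ^ 2 ≠ 0)
    (x y : ℝ)
    (hx : x = (c - h₀) * (h₀ + 1) / (c - 2 * h₀ - h₀ ^ 2) ^ 2)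
    (hy : y = (c - 2 * h₀ - h₀ ^ 2) ^ 2 * (c - h₀ - h₀ ^ 2) / (c - h₀) ^ 2) :
    PF x y = c ∧ hF x y = h₀ := by
  have he : c - h₀ ≠ 0 := sub_ne_zero.mpr h1
  obtain rfl : x = paramX c h₀ := hx
  obtain rfl : y = paramY c h₀ := hy
  exact ⟨PF_param he h2, hF_param he h2⟩
end
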